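/- arXiv:2109.01221 — 4 statements merged into one kernel-verified Lean document; each statement's English description precedes it below -/
import Mathlib

section
/- Let Y = {y_1, ..., y_m} be a nonempty finite set of m distinct integers, each less than −1, and let D = {1} ∪ Y. If (T,s) is a signed tree that realizes D, then diam(T) ≥ 4 if m = 1, diam(T) ≥ 5 if m = 2, and diam(T) ≥ 6 if m > 2. -/
/-- A signed tree: a finite tree (on vertex type `Fin n`) together with an
assignment of a sign to each possible edge (`true` = positive, `false` = negative). -/
structure SignedTree where
  n : ℕ
  G : SimpleGraph (Fin n)
  adjDec : DecidableRel G.Adj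
  isTree : G.IsTree
  sgn : Sym2 (Fin n) → Bool

namespace SignedTree

/-- The (unsigned) degree of a vertex in the underlying tree. -/
def deg (T : SignedTree) (v : Fin T.n) : ℕ :=
  letI := T.adjDec
  T.G.degree v

/-- The signed degree of a vertex: the number of positive edges incident to it
minus the number of negative edges incident to it. -/
def sdeg (T : SignedTree) (v : Fin T.n) : ℤ :=
  letI := T.adjDec
  ((((T.G.neighborFinset v).filter fun w => T.sgn s(v, w) = true).card : ℤ)) -
  ((((T.G.neighborFinset v).filter fun w => T.sgn s(v, w) = false).card : ℤ))

/-- The signed tree `T` realizes the set `D` if `D` is exactly the set of signed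
degrees of the vertices of `T`. -/
def Realizes (T : SignedTree) (D : Set ℤ) : Prop :=
  D = Set.range T.sdeg

end SignedTree

/-- `diamOfSet D` is the minimum diameter of the underlying tree over all
signed trees realizing `D`. -/
noncomputable def diamOfSet (D : Set ℤ) : ℕ :=
  sInf {k : ℕ | ∃ T : SignedTree, T.Realizes D ∧ T.G.diam = k}

/-- `orderOfSet D` is the minimum number of vertices of the underlying tree over
all signed trees realizing `D`. -/
noncomputable def orderOfSet (D : Set ℤ) : ℕ :=
  sInf {k : ℕ | ∃ T : SignedTree, T.Realizes D ∧ T.n = k}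

/-! With `-1` excluded, a leaf (signed degree `±1`) must have signed degree `1`, so every pendant
edge is positive. A vertex `v` of signed degree `< -1` therefore has two negative edges, both
leading to non-leaves, and in a tree at most one of them points back towards a given vertex `x`:
some vertex lies at distance `d(x, v) + 2` from `x`. Using this at `b` as seen from `a`, and then
at `a` as seen from the vertex just found, gives `diam ≥ d(a, b) + 4` for any two such vertices.
Distinct values of `Y` are taken at distinct vertices, and three vertices of a tree are never
pairwise adjacent. -/

open SimpleGraph Finset

namespace SimpleGraph

variable {V : Type*} {G : SimpleGraph V}

lemma exists_isPath_penultimate_eq_of_dist_lt {x u v : V} (huv : G.Adj u v)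
    (hd : G.dist x u < G.dist x v) : ∃ p : G.Walk x v, p.IsPath ∧ p.penultimate = u := by
  classical
  have hxu : G.Reachable x u := (Reachable.of_dist_ne_zero (by omega)).trans huv.symm.reachable
  obtain ⟨p, hp, hpl⟩ := hxu.exists_path_of_dist
  have hv : v ∉ p.support := fun hv ↦ by
    have := dist_le (p.takeUntil v hv)
    have := p.length_takeUntil_le_length hv
    omega
  exact ⟨p.concat huv, hp.concat hv huv, p.penultimate_concat huv⟩

lemma IsAcyclic.eq_of_adj_of_dist_lt (hG : G.IsAcyclic) {x u₁ u₂ v : V} (h₁ : G.Adj u₁ v)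
    (h₂ : G.Adj u₂ v) (hd₁ : G.dist x u₁ < G.dist x v) (hd₂ : G.dist x u₂ < G.dist x v) :
    u₁ = u₂ := by
  obtain ⟨p₁, hp₁, rfl⟩ := exists_isPath_penultimate_eq_of_dist_lt h₁ hd₁
  obtain ⟨p₂, hp₂, rfl⟩ := exists_isPath_penultimate_eq_of_dist_lt h₂ hd₂
  rw [Subtype.mk.inj ((hG.subsingleton_path x v).elim ⟨p₁, hp₁⟩ ⟨p₂, hp₂⟩)]

lemma IsAcyclic.exists_dist_eq_add_two (hG : G.IsAcyclic) {x v u₁ u₂ : V}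
    (hx : G.Reachable x v) (h₁ : G.Adj v u₁) (h₂ : G.Adj v u₂) (hne : u₁ ≠ u₂)
    (hw₁ : ∃ w, w ≠ v ∧ G.Adj u₁ w) (hw₂ : ∃ w, w ≠ v ∧ G.Adj u₂ w) :
    ∃ w, G.dist x w = G.dist x v + 2 := by
  have of_farther : ∀ u, G.Adj v u → (∃ w, w ≠ v ∧ G.Adj u w) →
      G.dist x u = G.dist x v + 1 → ∃ w, G.dist x w = G.dist x v + 2 := by
    rintro u hvu ⟨w, hwv, huw⟩ hdu
    refine ⟨w, ?_⟩
    have := hG.dist_eq_dist_add_one_of_adj_of_reachable x huw (hx.trans hvu.reachable)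
    have : ¬ G.dist x w < G.dist x u := fun hw ↦
      hwv (hG.eq_of_adj_of_dist_lt huw.symm hvu hw (by omega))
    omega
  have := hG.dist_eq_dist_add_one_of_adj_of_reachable x h₁ hx
  have := hG.dist_eq_dist_add_one_of_adj_of_reachable x h₂ hx
  have : ¬ (G.dist x u₁ < G.dist x v ∧ G.dist x u₂ < G.dist x v) := fun ⟨hd₁, hd₂⟩ ↦
    hne (hG.eq_of_adj_of_dist_lt h₁.symm h₂.symm hd₁ hd₂)
  by_cases hd₁ : G.dist x u₁ = G.dist x v + 1
  · exact of_farther u₁ h₁ hw₁ hd₁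
  · exact of_farther u₂ h₂ hw₂ (by omega)

lemma IsTree.two_le_dist_or (hG : G.IsTree) {a b c : V} (hab : a ≠ b) (hac : a ≠ c)
    (hbc : b ≠ c) : 2 ≤ G.dist a b ∨ 2 ≤ G.dist a c ∨ 2 ≤ G.dist b c := by
  have := hG.connected.pos_dist_of_ne hab
  have := hG.connected.pos_dist_of_ne hac
  have := hG.connected.pos_dist_of_ne hbc
  by_contra! h
  have hadj : G.Adj b c := dist_eq_one_iff_adj.mp (by omega)
  exact hG.dist_ne_of_adj a hadj (by omega)

end SimpleGraph

namespace SignedTree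

attribute [local instance] SignedTree.adjDec

variable (T : SignedTree)

def posNeighbors (v : Fin T.n) : Finset (Fin T.n) :=
  (T.G.neighborFinset v).filter fun w ↦ T.sgn s(v, w) = true

def negNeighbors (v : Fin T.n) : Finset (Fin T.n) :=
  (T.G.neighborFinset v).filter fun w ↦ T.sgn s(v, w) = false

variable {T}

lemma sdeg_eq (v : Fin T.n) : T.sdeg v = #(T.posNeighbors v) - #(T.negNeighbors v) := rfl

lemma card_posNeighbors_add_card_negNeighbors (v : Fin T.n) :
    #(T.posNeighbors v) + #(T.negNeighbors v) = T.deg v := by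
  rw [deg, ← card_neighborFinset_eq_degree,
    ← card_filter_add_card_filter_not (s := T.G.neighborFinset v) (T.sgn s(v, ·) = true)]
  simp only [posNeighbors, negNeighbors, Bool.not_eq_true]

lemma mem_negNeighbors {v w : Fin T.n} :
    w ∈ T.negNeighbors v ↔ T.G.Adj v w ∧ T.sgn s(v, w) = false := by
  rw [negNeighbors, mem_filter, mem_neighborFinset]

lemma sgn_eq_true_of_deg_eq_one {v u : Fin T.n} (hv : T.sdeg v ≠ -1) (hdeg : T.deg v = 1)
    (hvu : T.G.Adj v u) : T.sgn s(v, u) = true := by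
  by_contra hsgn
  have hneg : 0 < #(T.negNeighbors v) :=
    card_pos.mpr ⟨u, mem_negNeighbors.mpr ⟨hvu, by simpa using hsgn⟩⟩
  have := card_posNeighbors_add_card_negNeighbors v
  rw [sdeg_eq] at hv
  omega

lemma exists_adj_ne_of_sgn_eq_false {v u : Fin T.n} (hu : T.sdeg u ≠ -1) (hvu : T.G.Adj v u)
    (hsgn : T.sgn s(v, u) = false) : ∃ w, w ≠ v ∧ T.G.Adj u w := by
  have hdeg : T.deg u ≠ 1 := fun hdeg ↦ by
    simpa [Sym2.eq_swap, hsgn] using sgn_eq_true_of_deg_eq_one hu hdeg hvu.symm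
  have hpos : 0 < T.deg u := (T.G.degree_pos_iff_exists_adj u).mpr ⟨v, hvu.symm⟩
  rw [deg, ← card_neighborFinset_eq_degree] at hdeg hpos
  obtain ⟨w, hw, hwv⟩ := exists_mem_ne (s := T.G.neighborFinset u) (by omega) v
  exact ⟨w, hwv, (mem_neighborFinset _ _ _).mp hw⟩

lemma one_lt_card_negNeighbors {v : Fin T.n} (hv : T.sdeg v < -1) : 1 < #(T.negNeighbors v) := by
  rw [sdeg_eq] at hv
  omega

/-- Pendant edges are positive, so both ends of two negative edges at `v` are non-leaves. -/
lemma exists_dist_eq_add_two (hT : ∀ v, T.sdeg v ≠ -1) {v : Fin T.n} (hv : T.sdeg v < -1)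
    (x : Fin T.n) : ∃ w, T.G.dist x w = T.G.dist x v + 2 := by
  obtain ⟨u₁, u₂, hu₁, hu₂, hne⟩ := one_lt_card_iff.mp (one_lt_card_negNeighbors hv)
  rw [mem_negNeighbors] at hu₁ hu₂
  exact T.isTree.isAcyclic.exists_dist_eq_add_two (T.isTree.connected x v) hu₁.1 hu₂.1 hne
    (exists_adj_ne_of_sgn_eq_false (hT u₁) hu₁.1 hu₁.2)
    (exists_adj_ne_of_sgn_eq_false (hT u₂) hu₂.1 hu₂.2)

lemma dist_add_four_le_diam (hT : ∀ v, T.sdeg v ≠ -1) {a b : Fin T.n} (ha : T.sdeg a < -1)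
    (hb : T.sdeg b < -1) : T.G.dist a b + 4 ≤ T.G.diam := by
  have : Nonempty (Fin T.n) := ⟨a⟩
  have hdiam : T.G.ediam ≠ ⊤ := connected_iff_ediam_ne_top.mp T.isTree.connected
  obtain ⟨w, hw⟩ := exists_dist_eq_add_two hT hb a
  obtain ⟨w', hw'⟩ := exists_dist_eq_add_two hT ha w
  have := dist_le_diam (u := w) (v := w') hdiam
  rw [dist_comm (u := w) (v := a)] at hw'
  omega

end SignedTree

open SignedTree

/-- If a signed tree realizes `D = {1} ∪ Y` with `Y` a nonempty set of
`m` distinct integers each less than `-1`, then its diameter is at least 4 if `m = 1`,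
at least 5 if `m = 2`, and at least 6 if `m > 2`. -/
theorem stmt_7 (m : ℕ) (Y : Finset ℤ) (hcard : Y.card = m) (hne : Y.Nonempty)
    (hy : ∀ y ∈ Y, y < -1) (D : Set ℤ) (hD : D = insert 1 (↑Y : Set ℤ))
    (T : SignedTree) (hreal : T.Realizes D) :
    (m = 1 → 4 ≤ T.G.diam) ∧ (m = 2 → 5 ≤ T.G.diam) ∧ (2 < m → 6 ≤ T.G.diam) := by
  have hrange : Set.range T.sdeg = insert 1 ↑Y := hreal.symm.trans hD
  have hT : ∀ v, T.sdeg v ≠ -1 := fun v hv ↦ by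
    have : T.sdeg v ∈ insert 1 (Y : Set ℤ) := hrange ▸ Set.mem_range_self v
    rcases this with h | h
    · omega
    · exact absurd (hy _ h) (by omega)
  have hY : ∀ y ∈ Y, y ∈ Set.range T.sdeg := fun _ h ↦ hrange ▸ Set.mem_insert_of_mem 1 h
  refine ⟨fun _ ↦ ?_, fun hm ↦ ?_, fun hm ↦ ?_⟩
  · obtain ⟨_, h⟩ := hne
    obtain ⟨v, rfl⟩ := hY _ h
    simpa using dist_add_four_le_diam hT (hy _ h) (hy _ h)
  · obtain ⟨_, h₁, _, h₂, h₁₂⟩ := one_lt_card.mp (by omega : 1 < #Y)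
    obtain ⟨v₁, rfl⟩ := hY _ h₁
    obtain ⟨v₂, rfl⟩ := hY _ h₂
    have := T.isTree.connected.pos_dist_of_ne (ne_of_apply_ne _ h₁₂)
    have := dist_add_four_le_diam hT (hy _ h₁) (hy _ h₂)
    omega
  · obtain ⟨_, h₁, _, h₂, _, h₃, h₁₂, h₁₃, h₂₃⟩ := two_lt_card.mp (by omega : 2 < #Y)
    obtain ⟨v₁, rfl⟩ := hY _ h₁
    obtain ⟨v₂, rfl⟩ := hY _ h₂
    obtain ⟨v₃, rfl⟩ := hY _ h₃
    have := dist_add_four_le_diam hT (hy _ h₁) (hy _ h₂)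
    have := dist_add_four_le_diam hT (hy _ h₁) (hy _ h₃)
    have := dist_add_four_le_diam hT (hy _ h₂) (hy _ h₃)
    have := T.isTree.two_le_dist_or (ne_of_apply_ne _ h₁₂) (ne_of_apply_ne _ h₁₃)
      (ne_of_apply_ne _ h₂₃)
    omega
end

section
/- Let X = {x_1, ..., x_n} be a finite set of distinct integers each greater than 1, let D = {1, 0} ∪ X, and let (T,s) be a signed tree realizing D whose underlying tree has the minimum possible number of vertices among all signed trees realizing D. If ab is an edge of T with s(ab) = −, then sdeg(a) = 0 and sdeg(b) = 0. -/
/-!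
Let `p(v)` be the number of positive edges at `v`. In a tree on `n` vertices with `m` negative
edges, `∑ (p(v) - 1) = n - 2 - 2m`. When all signed degrees lie in `D`, they are nonnegative, so
every vertex has a positive edge, and a vertex of signed degree `x` contributes at least `x - 1`.
An endpoint of a negative edge with nonzero signed degree contributes one more, and `m ≥ 1`, so
`n ≥ 5 + ∑ (x - 1)`. But the path `+ - +` with `x - 1` positive leaves attached, for each `x`,
at a vertex of signed degree `1` realizes `D` with `4 + ∑ (x - 1)` vertices.
-/

open SimpleGraph Finset

lemma Fin.castAdd_ne_natAdd {m n : ℕ} (i : Fin m) (j : Fin n) :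
    Fin.castAdd n i ≠ Fin.natAdd m j := by
  simp [Fin.ext_iff]
  omega

lemma Finset.sum_le_sum_comp_of_subset_range {ι α M : Type*} [Fintype ι] [DecidableEq α]
    [AddCommMonoid M] [PartialOrder M] [IsOrderedAddMonoid M] {f : ι → α} {g : α → M}
    (hg : ∀ x, 0 ≤ g x) {s : Finset α} (hs : ↑s ⊆ Set.range f) :
    ∑ x ∈ s, g x ≤ ∑ i, g (f i) :=
  calc ∑ x ∈ s, g x ≤ ∑ x ∈ univ.image f, g x :=
        sum_le_sum_of_subset_of_nonneg (fun x hx => by simpa using hs hx) fun x _ _ => hg x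
    _ ≤ ∑ i, g (f i) := sum_image_le_of_nonneg fun x _ => hg x

lemma SimpleGraph.isTree_pathGraph_four : (pathGraph 4).IsTree := by
  let : DecidableRel (pathGraph 4).Adj := fun _ _ => decidable_of_iff' _ pathGraph_adj
  have hcard : (pathGraph 4).edgeFinset.card = 3 := by decide
  rw [isTree_iff_connected_and_card, Nat.card_eq_fintype_card, ← edgeFinset_card, hcard]
  exact ⟨pathGraph_connected 3, by simp⟩

namespace SignedTree

variable (T : SignedTree)

def posDeg (v : Fin T.n) : ℕ :=
  letI := T.adjDec
  ((T.G.neighborFinset v).filter fun w => T.sgn s(v, w) = true).card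

def negDeg (v : Fin T.n) : ℕ :=
  letI := T.adjDec
  ((T.G.neighborFinset v).filter fun w => T.sgn s(v, w) = false).card

variable {T}

lemma sdeg_eq_posDeg_sub_negDeg (v : Fin T.n) : T.sdeg v = T.posDeg v - T.negDeg v := rfl

lemma posDeg_add_negDeg (v : Fin T.n) : T.posDeg v + T.negDeg v = T.deg v := by
  let := T.adjDec
  simpa [posDeg, negDeg, deg] using
    card_filter_add_card_filter_not (s := T.G.neighborFinset v)
      (p := fun w => T.sgn s(v, w) = true)

lemma sum_deg_add_two : ∑ v, T.deg v + 2 = 2 * T.n := by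
  let := T.adjDec
  have := T.isTree.card_edgeFinset
  simp only [Fintype.card_fin] at this
  simp only [deg, sum_degrees_eq_twice_card_edges]
  omega

lemma negDeg_pos {v w : Fin T.n} (h : T.G.Adj v w) (hneg : T.sgn s(v, w) = false) :
    0 < T.negDeg v := by
  let := T.adjDec
  exact card_pos.2 ⟨w, by simpa [negDeg] using ⟨h, hneg⟩⟩

lemma deg_pos {v w : Fin T.n} (h : T.G.Adj v w) (u : Fin T.n) : 0 < T.deg u := by
  let := T.adjDec
  have : Nontrivial (Fin T.n) := ⟨v, w, h.ne⟩
  exact T.isTree.connected.preconnected.degree_pos_of_nontrivial u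

lemma sum_posDeg_add_four_le {a b : Fin T.n} (hab : T.G.Adj a b)
    (hneg : T.sgn s(a, b) = false) : ∑ v, T.posDeg v + 4 ≤ 2 * T.n := by
  have hsum : ∑ v, T.posDeg v + ∑ v, T.negDeg v + 2 = 2 * T.n := by
    rw [← sum_add_distrib, ← sum_deg_add_two]
    simp only [posDeg_add_negDeg]
  have hnega : 0 < T.negDeg a := negDeg_pos hab hneg
  have hnegb : 0 < T.negDeg b := negDeg_pos hab.symm (by rwa [Sym2.eq_swap])
  have hsumneg : T.negDeg a + T.negDeg b ≤ ∑ v, T.negDeg v := by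
    rw [← sum_pair hab.ne]
    exact sum_le_sum_of_subset (subset_univ _)
  omega

theorem sum_max_sdeg_sub_one_add_five_le (hnonneg : ∀ v, 0 ≤ T.sdeg v) {a b : Fin T.n}
    (hab : T.G.Adj a b) (hneg : T.sgn s(a, b) = false) (ha : T.sdeg a ≠ 0) :
    ∑ v, max (T.sdeg v - 1) 0 + 5 ≤ T.n := by
  have hvert (v : Fin T.n) :
      max (T.sdeg v - 1) 0 + (if v = a then 1 else 0) ≤ (T.posDeg v : ℤ) - 1 := by
    have := posDeg_add_negDeg v
    have := deg_pos hab v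
    have := hnonneg v
    rw [sdeg_eq_posDeg_sub_negDeg] at this ha ⊢
    split_ifs with h
    · have := negDeg_pos hab hneg
      subst h
      omega
    · omega
  have hsumpos : ∑ v, (T.posDeg v : ℤ) + 4 ≤ 2 * T.n := by
    exact_mod_cast sum_posDeg_add_four_le hab hneg
  calc ∑ v, max (T.sdeg v - 1) 0 + 5
      = ∑ v, (max (T.sdeg v - 1) 0 + if v = a then 1 else 0) + 4 := by
        rw [sum_add_distrib, sum_ite_eq', if_pos (mem_univ a)]
        ring
    _ ≤ ∑ v, ((T.posDeg v : ℤ) - 1) + 4 := by gcongr with v; exact hvert v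
    _ = ∑ v, (T.posDeg v : ℤ) - T.n + 4 := by simp [sum_sub_distrib]
    _ ≤ T.n := by omega

lemma sdeg_eq_sum [DecidableRel T.G.Adj] (v : Fin T.n) :
    T.sdeg v = ∑ w, if T.G.Adj v w then (if T.sgn s(v, w) then 1 else -1) else 0 := by
  obtain rfl : ‹DecidableRel T.G.Adj› = T.adjDec := Subsingleton.elim _ _
  rw [← sum_filter, ← neighborFinset_eq_filter, sum_ite]
  simp [sdeg, sub_eq_add_neg]

/-- The path `0 - 1 - 2 - 3` with signs `+ - +`; its signed degrees are `1, 0, 0, 1`. -/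
def pathFour : SignedTree where
  n := 4
  G := pathGraph 4
  adjDec _ _ := decidable_of_iff' _ pathGraph_adj
  isTree := isTree_pathGraph_four
  sgn e := e ≠ s(1, 2)

lemma range_sdeg_pathFour : Set.range pathFour.sdeg = {1, 0} := by
  ext d
  constructor
  · rintro ⟨v, rfl⟩
    revert v
    decide
  · rintro (rfl | rfl)
    exacts [⟨(0 : Fin 4), by decide⟩, ⟨(1 : Fin 4), by decide⟩]

section AttachLeaves

variable (T : SignedTree) (ℓ : Fin T.n) (t : ℕ)

def attachLeavesGraph : SimpleGraph (Fin (T.n + t)) :=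
  T.G.map (Fin.castAddEmb t) ⊔
    fromEdgeSet (Set.range fun i => s(Fin.castAdd t ℓ, Fin.natAdd T.n i))

variable {T ℓ t}

lemma attachLeavesGraph_adj {v w : Fin (T.n + t)} :
    (T.attachLeavesGraph ℓ t).Adj v w ↔
      (∃ a b, T.G.Adj a b ∧ Fin.castAdd t a = v ∧ Fin.castAdd t b = w) ∨
        (∃ i, s(Fin.castAdd t ℓ, Fin.natAdd T.n i) = s(v, w)) ∧ v ≠ w := by
  simp only [attachLeavesGraph, sup_adj, map_adj, fromEdgeSet_adj, Fin.castAddEmb_apply,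
    Set.mem_range]

@[simp] lemma attachLeavesGraph_adj_castAdd_castAdd {u w : Fin T.n} :
    (T.attachLeavesGraph ℓ t).Adj (Fin.castAdd t u) (Fin.castAdd t w) ↔ T.G.Adj u w := by
  simp [attachLeavesGraph_adj, (Fin.castAdd_ne_natAdd _ _).symm]

@[simp] lemma attachLeavesGraph_adj_castAdd_natAdd {u : Fin T.n} {i : Fin t} :
    (T.attachLeavesGraph ℓ t).Adj (Fin.castAdd t u) (Fin.natAdd T.n i) ↔ u = ℓ := by
  simp [attachLeavesGraph_adj, Fin.castAdd_ne_natAdd, eq_comm]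

@[simp] lemma attachLeavesGraph_adj_natAdd_castAdd {u : Fin T.n} {i : Fin t} :
    (T.attachLeavesGraph ℓ t).Adj (Fin.natAdd T.n i) (Fin.castAdd t u) ↔ u = ℓ := by
  rw [adj_comm, attachLeavesGraph_adj_castAdd_natAdd]

@[simp] lemma not_attachLeavesGraph_adj_natAdd_natAdd {i j : Fin t} :
    ¬ (T.attachLeavesGraph ℓ t).Adj (Fin.natAdd T.n i) (Fin.natAdd T.n j) := by
  simp [attachLeavesGraph_adj, Fin.castAdd_ne_natAdd]

lemma connected_attachLeavesGraph : (T.attachLeavesGraph ℓ t).Connected := by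
  have : ∀ v, (T.attachLeavesGraph ℓ t).Reachable v (Fin.castAdd t ℓ) := by
    intro v
    induction v using Fin.addCases with
    | left u =>
      let f : T.G →g T.attachLeavesGraph ℓ t :=
        ⟨Fin.castAdd t, attachLeavesGraph_adj_castAdd_castAdd.2⟩
      exact (T.isTree.connected u ℓ).map f
    | right i => exact Adj.reachable (by simp)
  exact (connected_iff_exists_forall_reachable _).2 ⟨_, fun v => (this v).symm⟩

lemma edgeSet_attachLeavesGraph :
    (T.attachLeavesGraph ℓ t).edgeSet = (Fin.castAddEmb t).sym2Map '' T.G.edgeSet ∪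
      Set.range fun i => s(Fin.castAdd t ℓ, Fin.natAdd T.n i) := by
  rw [attachLeavesGraph, edgeSet_sup, edgeSet_map, edgeSet_fromEdgeSet, sdiff_eq_left.2]
  rw [Set.disjoint_left]
  rintro _ ⟨i, rfl⟩ h
  exact Fin.castAdd_ne_natAdd _ _ (Sym2.mk_isDiag_iff.1 h)

lemma card_edgeSet_attachLeavesGraph :
    Nat.card (T.attachLeavesGraph ℓ t).edgeSet = Nat.card T.G.edgeSet + t := by
  have hinj : Function.Injective fun i : Fin t => s(Fin.castAdd t ℓ, Fin.natAdd T.n i) :=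
    fun i j h => (Fin.natAddEmb T.n).injective (Sym2.congr_right.1 h)
  have hdisj : Disjoint ((Fin.castAddEmb t).sym2Map '' T.G.edgeSet)
      (Set.range fun i => s(Fin.castAdd t ℓ, Fin.natAdd T.n i)) := by
    rw [Set.disjoint_right]
    rintro _ ⟨i, rfl⟩ ⟨e, -, he⟩
    induction e using Sym2.ind with
    | h a b => simp [Fin.castAdd_ne_natAdd] at he
  rw [edgeSet_attachLeavesGraph, Nat.card_coe_set_eq, Set.ncard_union_eq hdisj,
    Set.ncard_image_of_injective _ (Fin.castAddEmb t).sym2Map.injective,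
    Set.ncard_range_of_injective hinj, Nat.card_coe_set_eq, Nat.card_eq_fintype_card,
    Fintype.card_fin]

lemma isTree_attachLeavesGraph : (T.attachLeavesGraph ℓ t).IsTree := by
  have := T.isTree
  rw [isTree_iff_connected_and_card] at this ⊢
  refine ⟨connected_attachLeavesGraph, ?_⟩
  simp only [card_edgeSet_attachLeavesGraph, Nat.card_eq_fintype_card, Fintype.card_fin] at this ⊢
  omega

variable (T ℓ t) in
/-- The new leaves are the vertices `Fin.natAdd T.n i`, each joined to `ℓ` by a positive edge.
It is an `abbrev` so that its vertex type unfolds to `Fin (T.n + t)`. -/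
noncomputable abbrev attachLeaves : SignedTree where
  n := T.n + t
  G := T.attachLeavesGraph ℓ t
  adjDec := Classical.decRel _
  isTree := isTree_attachLeavesGraph
  sgn := Sym2.lift ⟨fun x y => Fin.addCases (fun u => Fin.addCases (fun w => T.sgn s(u, w))
    (fun _ => true) y) (fun _ => true) x, fun x y => by
      induction x using Fin.addCases <;> induction y using Fin.addCases <;> simp [Sym2.eq_swap]⟩

@[simp] lemma attachLeaves_n : (T.attachLeaves ℓ t).n = T.n + t := rfl

lemma sdeg_attachLeaves_castAdd (u : Fin T.n) :
    (T.attachLeaves ℓ t).sdeg (Fin.castAdd t u) =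
      T.sdeg u + if u = ℓ then (t : ℤ) else 0 := by
  classical
  rw [sdeg_eq_sum, sdeg_eq_sum, Fin.sum_univ_add]
  simp

lemma sdeg_attachLeaves_natAdd (i : Fin t) :
    (T.attachLeaves ℓ t).sdeg (Fin.natAdd T.n i) = 1 := by
  classical
  rw [sdeg_eq_sum, Fin.sum_univ_add]
  simp

lemma range_sdeg_attachLeaves (hℓ : T.sdeg ℓ = 1) (ht : 0 < t) :
    Set.range (T.attachLeaves ℓ t).sdeg = insert (1 + t : ℤ) (Set.range T.sdeg) := by
  ext d
  simp only [Set.mem_range, Set.mem_insert_iff]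
  constructor
  · rintro ⟨v, rfl⟩
    induction v using Fin.addCases with
    | left u =>
      by_cases hu : u = ℓ
      · left
        simp [sdeg_attachLeaves_castAdd, hu, hℓ]
      · right
        exact ⟨u, by simp [sdeg_attachLeaves_castAdd, hu]⟩
    | right i => exact Or.inr ⟨ℓ, by rw [sdeg_attachLeaves_natAdd, hℓ]⟩
  · rintro (rfl | ⟨u, rfl⟩)
    · exact ⟨Fin.castAdd t ℓ, by simp [sdeg_attachLeaves_castAdd, hℓ]⟩
    · by_cases hu : u = ℓ
      · exact ⟨Fin.natAdd T.n ⟨0, ht⟩, by rw [sdeg_attachLeaves_natAdd, hu, hℓ]⟩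
      · exact ⟨Fin.castAdd t u, by simp [sdeg_attachLeaves_castAdd, hu]⟩

end AttachLeaves

theorem exists_range_sdeg_eq (X : Finset ℤ) (hX : ∀ x ∈ X, 1 < x) :
    ∃ T : SignedTree, Set.range T.sdeg = insert 1 (insert 0 ↑X) ∧
      (T.n : ℤ) = 4 + ∑ x ∈ X, (x - 1) := by
  induction X using Finset.induction_on with
  | empty => exact ⟨pathFour, by simp [range_sdeg_pathFour], rfl⟩
  | insert x X hxX ih =>
    obtain ⟨T, hT, hn⟩ := ih fun y hy => hX y (mem_insert_of_mem hy)
    obtain ⟨ℓ, hℓ⟩ : (1 : ℤ) ∈ Set.range T.sdeg := hT ▸ Set.mem_insert _ _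
    have hx := hX x (mem_insert_self x X)
    refine ⟨T.attachLeaves ℓ (x - 1).toNat, ?_, ?_⟩
    · rw [range_sdeg_attachLeaves hℓ (by omega), hT, Int.toNat_of_nonneg (by omega)]
      simp [Set.insert_comm]
    · rw [sum_insert hxX, attachLeaves_n]
      push_cast
      omega

end SignedTree

/-- In an order-optimal signed tree realizing `D = {1, 0} ∪ X`
(`X` a set of distinct integers each greater than 1), every negative edge has both
endpoints of signed degree 0. -/
theorem stmt_12 (X : Finset ℤ) (hx : ∀ x ∈ X, 1 < x)
    (D : Set ℤ) (hD : D = insert 1 (insert 0 (↑X : Set ℤ)))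
    (T : SignedTree) (hreal : T.Realizes D)
    (hopt : ∀ T' : SignedTree, T'.Realizes D → T.n ≤ T'.n)
    (a b : Fin T.n) (hadj : T.G.Adj a b) (hneg : T.sgn s(a, b) = false) :
    T.sdeg a = 0 ∧ T.sdeg b = 0 := by
  have hrange : Set.range T.sdeg = insert 1 (insert 0 ↑X) := hreal.symm.trans hD
  have hnonneg : ∀ v, 0 ≤ T.sdeg v := fun v => by
    have : T.sdeg v ∈ insert 1 (insert 0 (↑X : Set ℤ)) := hrange ▸ Set.mem_range_self v
    rcases this with h | h | h
    exacts [h ▸ zero_le_one, h.ge, (zero_lt_one.trans (hx _ h)).le]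
  have hsumX : ∑ x ∈ X, (x - 1) ≤ ∑ v, max (T.sdeg v - 1) 0 :=
    calc ∑ x ∈ X, (x - 1) = ∑ x ∈ X, max (x - 1) 0 :=
          sum_congr rfl fun x hxX => (max_eq_left (by linarith [hx x hxX])).symm
      _ ≤ ∑ v, max (T.sdeg v - 1) 0 :=
          sum_le_sum_comp_of_subset_range (fun _ => le_max_right _ _)
            (hrange ▸ fun x hxX => Or.inr (Or.inr hxX))
  obtain ⟨T', hT', hn'⟩ := SignedTree.exists_range_sdeg_eq X hx
  have hle : (T.n : ℤ) ≤ T'.n := by exact_mod_cast hopt T' (hD.trans hT'.symm)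
  have hzero (p q : Fin T.n) (hpq : T.G.Adj p q) (hpq' : T.sgn s(p, q) = false) :
      T.sdeg p = 0 := by
    by_contra hp
    have := T.sum_max_sdeg_sub_one_add_five_le hnonneg hpq hpq' hp
    omega
  exact ⟨hzero a b hadj hneg, hzero b a hadj.symm (by rwa [Sym2.eq_swap])⟩
end

section
/- diam({1, 0}) = 3; that is, the minimum diameter of the underlying tree over all signed trees realizing the signed degree set {1, 0} equals 3. -/
/-!
In a signed tree realizing `{1, 0}`, a vertex `b` of signed degree `0` is not isolated, so it has
a negative neighbour `w` and a positive neighbour `y`. The vertex `w` has a negative edge and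
signed degree `0` or `1`, so it also has a positive neighbour `x`. The signs force `x ≠ b` and
`w ≠ y`, and in a tree `x ≠ y` since `b` is at distance `1` from `y` but not from `x`; hence
`x - w - b - y` is a path and the diameter is at least `3`. The path `+ - +` on four vertices
realizes `{1, 0}` and has diameter `3`.
-/

open SimpleGraph Finset

namespace SimpleGraph

variable {V : Type*} {G : SimpleGraph V}

lemma IsTree.dist_eq_length_of_isPath (hG : G.IsTree) {u v : V} {p : G.Walk u v}
    (hp : p.IsPath) : G.dist u v = p.length := by
  obtain ⟨q, hq, hlen⟩ := hG.connected.exists_path_of_dist u v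
  rw [← hlen, (hG.existsUnique_path u v).unique hq hp]

lemma IsTree.length_le_diam [Finite V] (hG : G.IsTree) {u v : V} {p : G.Walk u v}
    (hp : p.IsPath) : p.length ≤ G.diam := by
  have : Nonempty V := ⟨u⟩
  rw [← hG.dist_eq_length_of_isPath hp]
  exact dist_le_diam (connected_iff_ediam_ne_top.mp hG.connected)

lemma IsTree.three_le_diam [Finite V] (hG : G.IsTree) {x w b y : V} (hxw : G.Adj x w)
    (hwb : G.Adj w b) (hby : G.Adj b y) (hxb : x ≠ b) (hwy : w ≠ y) : 3 ≤ G.diam := by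
  have hxy : x ≠ y := by
    rintro rfl
    exact hG.dist_ne_of_adj b hxw <|
      (dist_eq_one_iff_adj.mpr hby).trans (dist_eq_one_iff_adj.mpr hwb.symm).symm
  have hp : (Walk.cons hxw (.cons hwb (.cons hby .nil))).IsPath := by
    simp [hxw.ne, hwb.ne, hby.ne, hxb, hxy, hwy]
  exact hG.length_le_diam hp

lemma diam_lt_card [Fintype V] [Nonempty V] (G : SimpleGraph V) : G.diam < Fintype.card V := by
  obtain ⟨u, v, huv⟩ := G.exists_dist_eq_diam
  rw [← huv]
  by_cases h : G.Reachable u v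
  · obtain ⟨p, hp, hlen⟩ := h.exists_path_of_dist
    exact hlen ▸ hp.length_lt
  · rw [dist_eq_zero_of_not_reachable h]
    exact Fintype.card_pos

instance (n : ℕ) : DecidableRel (pathGraph n).Adj := fun _ _ => decidable_of_iff' _ pathGraph_adj

lemma isTree_pathGraph_four_s16 : (pathGraph 4).IsTree := by
  rw [isTree_iff_connected_and_card, Nat.card_eq_fintype_card, Nat.card_eq_fintype_card,
    ← edgeFinset_card]
  exact ⟨pathGraph_connected 3, by decide⟩

end SimpleGraph

namespace SignedTree

variable (T : SignedTree)

def signDeg (v : Fin T.n) (b : Bool) : ℕ :=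
  letI := T.adjDec
  ((T.G.neighborFinset v).filter fun w => T.sgn s(v, w) = b).card

lemma sdeg_eq_signDeg_sub_signDeg (v : Fin T.n) :
    T.sdeg v = T.signDeg v true - T.signDeg v false := rfl

lemma signDeg_true_add_signDeg_false (v : Fin T.n) :
    T.signDeg v true + T.signDeg v false = T.deg v := by
  let := T.adjDec
  simpa [signDeg, deg] using
    card_filter_add_card_filter_not (s := T.G.neighborFinset v) (fun w => T.sgn s(v, w) = true)

variable {T}

lemma signDeg_pos_iff {v : Fin T.n} {b : Bool} :
    0 < T.signDeg v b ↔ ∃ w, T.G.Adj v w ∧ T.sgn s(v, w) = b := by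
  let := T.adjDec
  simp [signDeg, card_pos, Finset.Nonempty]

lemma deg_pos_of_ne {u v : Fin T.n} (huv : u ≠ v) : 0 < T.deg v := by
  let := T.adjDec
  exact (T.isTree.connected u v).degree_pos_right huv

lemma exists_adj_sgn_of_sdeg_eq_zero {v : Fin T.n} (hv : T.sdeg v = 0) (hdeg : 0 < T.deg v)
    (b : Bool) : ∃ w, T.G.Adj v w ∧ T.sgn s(v, w) = b := by
  have hsum := T.signDeg_true_add_signDeg_false v
  rw [sdeg_eq_signDeg_sub_signDeg] at hv
  apply signDeg_pos_iff.mp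
  cases b <;> omega

lemma exists_adj_sgn_true_of_sdeg_nonneg {v w : Fin T.n} (hv : 0 ≤ T.sdeg v)
    (hw : T.G.Adj v w) (hs : T.sgn s(v, w) = false) : ∃ x, T.G.Adj v x ∧ T.sgn s(v, x) = true := by
  have hneg : 0 < T.signDeg v false := signDeg_pos_iff.mpr ⟨w, hw, hs⟩
  rw [sdeg_eq_signDeg_sub_signDeg] at hv
  exact signDeg_pos_iff.mp (by omega)

lemma three_le_diam_of_realizes (hT : T.Realizes {1, 0}) : 3 ≤ T.G.diam := by
  have hsdeg (v : Fin T.n) : T.sdeg v = 1 ∨ T.sdeg v = 0 := by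
    have : T.sdeg v ∈ ({1, 0} : Set ℤ) := hT ▸ Set.mem_range_self v
    simpa using this
  obtain ⟨a, ha⟩ : (1 : ℤ) ∈ Set.range T.sdeg := hT ▸ by simp
  obtain ⟨b, hb⟩ : (0 : ℤ) ∈ Set.range T.sdeg := hT ▸ by simp
  have hdeg : 0 < T.deg b := deg_pos_of_ne (u := a) (by rintro rfl; omega)
  obtain ⟨w, hbw, hbw_sgn⟩ := exists_adj_sgn_of_sdeg_eq_zero hb hdeg false
  obtain ⟨y, hby, hby_sgn⟩ := exists_adj_sgn_of_sdeg_eq_zero hb hdeg true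
  obtain ⟨x, hwx, hwx_sgn⟩ := exists_adj_sgn_true_of_sdeg_nonneg (v := w)
    (by rcases hsdeg w with h | h <;> omega) hbw.symm (by rwa [Sym2.eq_swap])
  refine T.isTree.three_le_diam hwx.symm hbw.symm hby ?_ ?_
  · rintro rfl
    rw [Sym2.eq_swap, hbw_sgn] at hwx_sgn
    cases hwx_sgn
  · rintro rfl
    rw [hbw_sgn] at hby_sgn
    cases hby_sgn

def pathPlusMinusPlus : SignedTree where
  n := 4
  G := pathGraph 4
  adjDec := inferInstance
  isTree := isTree_pathGraph_four_s16
  sgn e := decide (e ≠ s(1, 2))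

lemma pathPlusMinusPlus_realizes : pathPlusMinusPlus.Realizes {1, 0} := by
  have hsdeg : ∀ v, pathPlusMinusPlus.sdeg v = 1 ∨ pathPlusMinusPlus.sdeg v = 0 := by decide
  ext d
  constructor
  · rintro (rfl | rfl)
    exacts [⟨(0 : Fin 4), by decide⟩, ⟨(1 : Fin 4), by decide⟩]
  · rintro ⟨v, rfl⟩
    exact hsdeg v

lemma pathPlusMinusPlus_diam : pathPlusMinusPlus.G.diam = 3 :=
  le_antisymm (Nat.le_of_lt_succ (pathGraph 4).diam_lt_card)
    (three_le_diam_of_realizes pathPlusMinusPlus_realizes)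

end SignedTree

/-- `diam({1, 0}) = 3`. -/
theorem stmt_16 : diamOfSet ({1, 0} : Set ℤ) = 3 := by
  have h3 : 3 ∈ {k : ℕ | ∃ T : SignedTree, T.Realizes ({1, 0} : Set ℤ) ∧ T.G.diam = k} :=
    ⟨_, SignedTree.pathPlusMinusPlus_realizes, SignedTree.pathPlusMinusPlus_diam⟩
  refine le_antisymm (Nat.sInf_le h3) (le_csInf ⟨3, h3⟩ ?_)
  rintro k ⟨T, hT, rfl⟩
  exact T.three_le_diam_of_realizes hT
end

section
/- For every integer x > 1, diam({1, x}) = 2; that is, the minimum diameter of the underlying tree over all signed trees realizing the signed degree set {1, x} equals 2. -/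
/-!
The all-positive star with `x` leaves realizes `{1, x}` and has diameter `2`. Conversely, in any
signed tree realizing `{1, x}` a vertex of signed degree `x ≥ 2` has two neighbours, which are not
adjacent in a tree, so the diameter is at least `2`.
-/

namespace SimpleGraph

variable {V : Type*} {G : SimpleGraph V}

lemma IsAcyclic.not_adj_of_adj_of_adj (hG : G.IsAcyclic) {v a b : V}
    (ha : G.Adj v a) (hb : G.Adj v b) : ¬ G.Adj a b := fun hab ↦
  hG.dist_ne_of_adj hab ha.reachable <| by
    rw [dist_eq_one_iff_adj.mpr ha, dist_eq_one_iff_adj.mpr hb]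

lemma diam_le_two_of_isUniversal {r : V} (hr : G.IsUniversal r) : G.diam ≤ 2 :=
  ENat.toNat_le_of_le_natCast <| calc
    G.ediam ≤ 2 * G.eccent r := G.ediam_le_two_mul_eccent r
    _ ≤ 2 * 1 := by gcongr; exact (G.eccent_le_one_iff r).mpr hr
    _ = 2 := by norm_num

-- A connected graph on at least two vertices has diameter `1` only if it is complete, and two
-- neighbours of a vertex of a tree are never adjacent.
lemma IsTree.two_le_diam_of_one_lt_degree [Fintype V] [DecidableRel G.Adj] (hG : G.IsTree)
    {v : V} (hv : 1 < G.degree v) : 2 ≤ G.diam := by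
  obtain ⟨a, ha, b, hb, hab⟩ := Finset.one_lt_card.mp hv
  rw [mem_neighborFinset] at ha hb
  have : Nontrivial V := ⟨⟨a, b, hab⟩⟩
  have hne_top : G ≠ ⊤ := fun h ↦
    hG.isAcyclic.not_adj_of_adj_of_adj ha hb (h ▸ (top_adj a b).mpr hab)
  have hdiam_ne_zero : G.diam ≠ 0 :=
    diam_ne_zero_of_ediam_ne_top (connected_iff_ediam_ne_top.mp hG.connected)
  have hdiam_ne_one : G.diam ≠ 1 := fun h ↦ hne_top (diam_eq_one.mp h)
  omega

lemma range_degree_starGraph [Fintype V] [DecidableEq V] [Nontrivial V] (r : V) :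
    Set.range (fun v ↦ (starGraph r).degree v) = {1, Fintype.card V - 1} := by
  ext d
  constructor
  · rintro ⟨v, rfl⟩
    by_cases hv : v = r
    · exact hv ▸ Or.inr degree_starGraph_center
    · exact Or.inl (degree_starGraph_of_ne_center hv)
  · rintro (rfl | rfl)
    · obtain ⟨v, hv⟩ := exists_ne r
      exact ⟨v, degree_starGraph_of_ne_center hv⟩
    · exact ⟨r, degree_starGraph_center⟩

lemma diam_starGraph [Fintype V] [DecidableEq V] (r : V) (hV : 3 ≤ Fintype.card V) :
    (starGraph r).diam = 2 :=
  (diam_le_two_of_isUniversal isUniversal_starGraph_self).antisymm <|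
    (isTree_starGraph r).two_le_diam_of_one_lt_degree (v := r) <| by
      rw [degree_starGraph_center]; omega

end SimpleGraph

namespace SignedTree

open SimpleGraph

lemma sdeg_le_deg (T : SignedTree) (v : Fin T.n) : T.sdeg v ≤ T.deg v := by
  let := T.adjDec
  have hpos : ((T.G.neighborFinset v).filter fun w ↦ T.sgn s(v, w) = true).card ≤ T.deg v :=
    Finset.card_filter_le _ _
  unfold sdeg
  omega

lemma two_le_diam_of_one_lt_sdeg (T : SignedTree) {v : Fin T.n} (hv : 1 < T.sdeg v) :
    2 ≤ T.G.diam := by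
  let := T.adjDec
  have : 1 < T.deg v := by have := T.sdeg_le_deg v; omega
  exact T.isTree.two_le_diam_of_one_lt_degree this

def allPositive {n : ℕ} (G : SimpleGraph (Fin n)) [DecidableRel G.Adj] (hG : G.IsTree) :
    SignedTree :=
  ⟨n, G, inferInstance, hG, fun _ ↦ true⟩

lemma sdeg_allPositive {n : ℕ} (G : SimpleGraph (Fin n)) [DecidableRel G.Adj] (hG : G.IsTree)
    (v : Fin n) : (allPositive G hG).sdeg v = G.degree v := by
  simp only [sdeg, allPositive, Finset.filter_true, Bool.true_eq_false, Finset.filter_false,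
    Finset.card_empty, Nat.cast_zero, sub_zero]
  rfl

lemma realizes_allPositive_iff {n : ℕ} (G : SimpleGraph (Fin n)) [DecidableRel G.Adj]
    (hG : G.IsTree) (D : Set ℤ) :
    (allPositive G hG).Realizes D ↔ D = (↑) '' Set.range (fun v ↦ G.degree v) := by
  rw [Realizes, ← Set.range_comp']
  exact Iff.of_eq (congrArg _ (congrArg _ (funext (sdeg_allPositive G hG))))

lemma realizes_allPositive_starGraph {m : ℕ} (hm : 1 ≤ m) :
    (allPositive (starGraph (0 : Fin (m + 1))) (isTree_starGraph 0)).Realizes {1, (m : ℤ)} := by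
  have : Nontrivial (Fin (m + 1)) := Fin.nontrivial_iff_two_le.mpr (by omega)
  rw [realizes_allPositive_iff, range_degree_starGraph, Set.image_pair]
  simp

end SignedTree

/-- For every integer `x > 1`, `diam({1, x}) = 2`. -/
theorem stmt_17 (x : ℤ) (hx : 1 < x) : diamOfSet ({1, x} : Set ℤ) = 2 := by
  obtain ⟨m, rfl⟩ : ∃ m : ℕ, x = m := ⟨x.toNat, by omega⟩
  have hstar : 2 ∈ {k : ℕ | ∃ T : SignedTree, T.Realizes {1, (m : ℤ)} ∧ T.G.diam = k} :=
    ⟨_, SignedTree.realizes_allPositive_starGraph (by omega),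
      SimpleGraph.diam_starGraph (0 : Fin (m + 1)) (by simp; omega)⟩
  refine (Nat.sInf_le hstar).antisymm (le_csInf ⟨2, hstar⟩ ?_)
  rintro k ⟨T, hT, rfl⟩
  obtain ⟨v, hv⟩ : (m : ℤ) ∈ Set.range T.sdeg := hT ▸ Or.inr rfl
  exact T.two_le_diam_of_one_lt_sdeg (hv ▸ hx)
end
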